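/- arXiv:2309.06699 — 9 statements merged into one kernel-verified Lean document; each statement's English description precedes it below -/
import Mathlib

section
/- Let C be a convex subset of a real vector space X and x ∈ C. Then F_min(x,C) = C ∩ (lin cone(C - x) + x), where cone denotes the conic hull and lin K is the lineality space of a convex cone K (the largest linear subspace contained in K). -/
open Pointwise

/-- A face of a convex set `C`: a convex subset `F ⊆ C` such that whenever a point of `F`
lies in the open segment between two points of `C`, both endpoints belong to `F`. -/
def IsFace {X : Type*} [AddCommGroup X] [Module ℝ X] (C F : Set X) : Prop :=
  F ⊆ C ∧ Convex ℝ F ∧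
    ∀ x ∈ F, ∀ y ∈ C, ∀ z ∈ C, x ∈ openSegment ℝ y z → y ∈ F ∧ z ∈ F

/-- The minimal face of `C` containing `x`: the intersection of all faces containing `x`. -/
def minFace {X : Type*} [AddCommGroup X] [Module ℝ X] (C : Set X) (x : X) : Set X :=
  ⋂₀ {F | IsFace C F ∧ x ∈ F}

/-- The conic hull of a set. -/
def coneHull {X : Type*} [AddCommGroup X] [Module ℝ X] (S : Set X) : Set X :=
  {w | ∃ (a : ℝ) (s : X), 0 ≤ a ∧ s ∈ S ∧ w = a • s}

/-- The intrinsic core of a convex set. -/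
def icr {X : Type*} [AddCommGroup X] [Module ℝ X] (C : Set X) : Set X :=
  {x ∈ C | ∀ y ∈ C, ∃ z ∈ C, x ∈ openSegment ℝ y z}

/-- The face relative interior of a convex set in a topological vector space. -/
def fri {X : Type*} [AddCommGroup X] [Module ℝ X] [TopologicalSpace X] (C : Set X) : Set X :=
  {x ∈ C | C ⊆ closure (minFace C x)}

/-- `F_min(x,C) = C ∩ (lin cone(C - x) + x)`, where `lin K = K ∩ (-K)`
is the lineality space of the convex cone `K = cone (C - x)`. -/
theorem minFace_eq_lineality {X : Type*} [AddCommGroup X] [Module ℝ X]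
    (C : Set X) (hC : Convex ℝ C) (x : X) (hx : x ∈ C) :
    minFace C x =
      C ∩ ((coneHull ((fun c => c - x) '' C) ∩ -coneHull ((fun c => c - x) '' C)) + {x}) := by
  classical
  set K := coneHull ((fun c => c - x) '' C) with hKdef
  have hmemK : ∀ y ∈ C, y - x ∈ K := fun y hy =>
    ⟨1, y - x, zero_le_one, ⟨y, hy, rfl⟩, (one_smul _ _).symm⟩
  have hsmul : ∀ (a : ℝ), 0 ≤ a → ∀ u ∈ K, a • u ∈ K := by
    rintro a ha u ⟨b, s, hb, hs, rfl⟩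
    exact ⟨a * b, s, mul_nonneg ha hb, hs, (mul_smul a b s).symm⟩
  have hzero : (0 : X) ∈ K := ⟨0, x - x, le_refl 0, ⟨x, hx, rfl⟩, (zero_smul _ _).symm⟩
  have hadd : ∀ u ∈ K, ∀ v ∈ K, u + v ∈ K := by
    rintro u ⟨a, s, ha, ⟨c, hc, rfl⟩, rfl⟩ v ⟨b, t, hb, ⟨d, hd, rfl⟩, rfl⟩
    rcases eq_or_lt_of_le (add_nonneg ha hb) with h0 | hpos
    · have ha0 : a = 0 := by linarith [ha, hb]
      have hb0 : b = 0 := by linarith [ha, hb]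
      simpa [ha0, hb0] using hzero
    · refine ⟨a + b, (a / (a + b)) • c + (b / (a + b)) • d - x, le_of_lt hpos,
        ⟨(a / (a + b)) • c + (b / (a + b)) • d,
          hC hc hd (div_nonneg ha (le_of_lt hpos)) (div_nonneg hb (le_of_lt hpos))
            (by field_simp), rfl⟩, ?_⟩
      have hne : a + b ≠ 0 := ne_of_gt hpos
      show a • (c - x) + b • (d - x) = (a + b) • ((a / (a + b)) • c + (b / (a + b)) • d - x)
      match_scalars <;> field_simp <;> ring
  -- membership characterization of the RHS translate
  have hmemRHS : ∀ y : X, y ∈ (K ∩ -K) + ({x} : Set X) ↔ y - x ∈ K ∧ x - y ∈ K := by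
    intro y
    constructor
    · rintro ⟨s, ⟨hs1, hs2⟩, z, hz, rfl⟩
      rcases hz with rfl
      refine ⟨by simpa using hs1, ?_⟩
      have : -s ∈ K := by simpa [Set.mem_neg] using hs2
      simpa [neg_sub] using this
    · rintro ⟨h1, h2⟩
      refine ⟨y - x, ⟨h1, ?_⟩, x, rfl, by module⟩
      simpa [Set.mem_neg, neg_sub] using h2
  set D : Set X := C ∩ ((K ∩ -K) + ({x} : Set X)) with hDdef
  have hxD : x ∈ D := ⟨hx, (hmemRHS x).2 (by simpa using hzero)⟩
  have hDface : IsFace C D := by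
    refine ⟨Set.inter_subset_left, ?_, ?_⟩
    · -- convexity
      rintro y₁ ⟨hy₁C, hy₁⟩ y₂ ⟨hy₂C, hy₂⟩ a b ha hb hab
      rcases (hmemRHS y₁).1 hy₁ with ⟨h1, h1'⟩
      rcases (hmemRHS y₂).1 hy₂ with ⟨h2, h2'⟩
      refine ⟨hC hy₁C hy₂C ha hb hab, (hmemRHS _).2 ⟨?_, ?_⟩⟩
      · have : a • (y₁ - x) + b • (y₂ - x) ∈ K :=
          hadd _ (hsmul a ha _ h1) _ (hsmul b hb _ h2)
        have he : a • y₁ + b • y₂ - x = a • (y₁ - x) + b • (y₂ - x) := by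
          linear_combination (norm := module) congrArg (fun r : ℝ => r • x) hab
        rw [he]; exact this
      · have : a • (x - y₁) + b • (x - y₂) ∈ K :=
          hadd _ (hsmul a ha _ h1') _ (hsmul b hb _ h2')
        have he : x - (a • y₁ + b • y₂) = a • (x - y₁) + b • (x - y₂) := by
          linear_combination (norm := module) (-1 : ℝ) • congrArg (fun r : ℝ => r • x) hab
        rw [he]; exact this
    · -- face property
      rintro y ⟨hyC, hy⟩ u huC v hvC ⟨a, b, ha, hb, hab, hseg⟩
      rcases (hmemRHS y).1 hy with ⟨_, hxy⟩
      have key : ∀ (p q : X) (c d : ℝ), 0 < c → 0 < d → c + d = 1 →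
          c • p + d • q = y → p ∈ C → q ∈ C → p ∈ D := by
        intro p q c d hc hd hcd hpq hpC hqC
        refine ⟨hpC, (hmemRHS p).2 ⟨hmemK p hpC, ?_⟩⟩
        have h1 : c • (x - p) = (x - y) + d • (q - x) := by
          linear_combination (norm := module)
            congrArg (fun r : ℝ => r • x) hcd - hpq
        have h2 : (x - y) + d • (q - x) ∈ K :=
          hadd _ hxy _ (hsmul d (le_of_lt hd) _ (hmemK q hqC))
        have h3 : c⁻¹ • (c • (x - p)) ∈ K := by
          rw [h1]; exact hsmul _ (le_of_lt (inv_pos.mpr hc)) _ h2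
        rwa [smul_smul, inv_mul_cancel₀ (ne_of_gt hc), one_smul] at h3
      exact ⟨key u v a b ha hb hab hseg huC hvC,
        key v u b a hb ha (by linarith) (by rw [← hseg]; abel) hvC huC⟩
  apply Set.Subset.antisymm
  · intro y hy
    exact hy D ⟨hDface, hxD⟩
  · rintro y ⟨hyC, hy⟩ F ⟨⟨hFC, hFconv, hFface⟩, hxF⟩
    rcases (hmemRHS y).1 hy with ⟨_, hxy⟩
    rcases hxy with ⟨b, s, hb, ⟨c, hcC, rfl⟩, hbs⟩
    rcases eq_or_lt_of_le hb with hb0 | hbpos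
    · have hxy0 : x = y := by
        have h0 : x - y = 0 := by rw [hbs, ← hb0, zero_smul]
        exact sub_eq_zero.mp h0
      rwa [← hxy0]
    · have hbs' : x - y = b • (c - x) := hbs
      have hb1 : (0:ℝ) < 1 + b := by linarith
      have hne : (1 + b) ≠ 0 := ne_of_gt hb1
      have ha : (0:ℝ) < 1 / (1 + b) := by positivity
      have hb' : (0:ℝ) < b / (1 + b) := by positivity
      have hsum : 1 / (1 + b) + b / (1 + b) = 1 := by field_simp
      have h : y + b • c = (1 + b) • x := by
        linear_combination (norm := module) (-1 : ℝ) • hbs'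
      have hcomb : (1 / (1 + b)) • y + (b / (1 + b)) • c = x := by
        have h2 : x = (1 / (1 + b)) • (y + b • c) := by
          rw [h, smul_smul, show 1 / (1 + b) * (1 + b) = 1 by field_simp, one_smul]
        rw [h2, smul_add, smul_smul, show 1 / (1 + b) * b = b / (1 + b) by ring]
      have hxseg : x ∈ openSegment ℝ y c := ⟨1 / (1 + b), b / (1 + b), ha, hb', hsum, hcomb⟩
      exact (hFface x hxF y hyC c hcC hxseg).1
end

section
/- Let C be a convex subset of a real vector space. Then x belongs to the intrinsic core of C (i.e., for every y ∈ C there exists z ∈ C with x in the open segment (y,z)) if and only if F_min(x,C) = C. -/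
open Pointwise

/-! The minimal face of `x` is the set of points `y ∈ C` for which the segment from `y` through
`x` can be prolonged beyond `x` inside `C`. This set is convex (shrink two prolongations to a
common length), it is extreme in `C` (by Pasch's axiom), and every face containing `x` contains it.
Hence `x ∈ icr C` says exactly that this set is all of `C`. -/

open Set

section

variable {𝕜 E : Type*} [Field 𝕜] [LinearOrder 𝕜] [IsStrictOrderedRing 𝕜]
  [AddCommGroup E] [Module 𝕜 E]

theorem mem_openSegment_iff_eq_add_smul_sub {x y z : E} :
    x ∈ openSegment 𝕜 y z ↔ ∃ ε : 𝕜, 0 < ε ∧ z = x + ε • (x - y) := by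
  constructor
  · rintro ⟨a, b, ha, hb, hab, rfl⟩
    refine ⟨a / b, by positivity, ?_⟩
    obtain rfl : a = 1 - b := by linear_combination hab
    match_scalars <;> field_simp <;> ring
  · rintro ⟨ε, hε, rfl⟩
    refine ⟨ε / (1 + ε), 1 / (1 + ε), by positivity, by positivity, by field_simp; ring, ?_⟩
    match_scalars <;> field_simp
    ring

/-- Pasch's axiom for the triangle `y z q`. -/
theorem exists_mem_segment_of_mem_openSegment_of_mem_openSegment {x p q y z : E}
    (hx : x ∈ openSegment 𝕜 p q) (hp : p ∈ openSegment 𝕜 y z) :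
    ∃ r ∈ segment 𝕜 z q, x ∈ openSegment 𝕜 y r := by
  obtain ⟨b, b', hb, hb', hbb', rfl⟩ := hx
  obtain ⟨a, a', ha, ha', haa', rfl⟩ := hp
  have hba : 0 < 1 - b * a := by nlinarith
  refine ⟨(b * a' / (1 - b * a)) • z + (b' / (1 - b * a)) • q,
    ⟨_, _, by positivity, by positivity, ?_, rfl⟩,
    b * a, 1 - b * a, by positivity, hba, by ring, ?_⟩
  · field_simp
    linear_combination b * haa' + hbb'
  · match_scalars <;> field_simp

theorem Convex.add_smul_mem_of_le {s : Set E} (hs : Convex 𝕜 s) {x v : E} {δ ε : 𝕜}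
    (hx : x ∈ s) (hε : x + ε • v ∈ s) (hδ : 0 ≤ δ) (hδε : δ ≤ ε) : x + δ • v ∈ s := by
  rcases hδ.eq_or_lt with rfl | hδ
  · simpa using hx
  have hε0 : 0 < ε := hδ.trans_le hδε
  simpa [smul_smul, div_mul_cancel₀ _ hε0.ne'] using
    hs.add_smul_mem hx hε ⟨div_nonneg hδ.le hε0.le, (div_le_one hε0).2 hδε⟩

end

section

variable {X : Type*} [AddCommGroup X] [Module ℝ X] {C F : Set X} {x : X}

def prolongable (C : Set X) (x : X) : Set X :=
  {y ∈ C | ∃ z ∈ C, x ∈ openSegment ℝ y z}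

theorem self_mem_prolongable (hx : x ∈ C) : x ∈ prolongable C x :=
  ⟨hx, x, hx, by simp [openSegment_same]⟩

theorem Convex.convex_prolongable (hC : Convex ℝ C) : Convex ℝ (prolongable C x) := by
  rintro y₁ ⟨hy₁, z₁, hz₁, hx₁⟩ y₂ ⟨hy₂, z₂, hz₂, hx₂⟩ t₁ t₂ ht₁ ht₂ ht
  have hx : x ∈ C := hC.openSegment_subset hy₁ hz₁ hx₁
  obtain ⟨ε₁, hε₁, rfl⟩ := mem_openSegment_iff_eq_add_smul_sub.1 hx₁
  obtain ⟨ε₂, hε₂, rfl⟩ := mem_openSegment_iff_eq_add_smul_sub.1 hx₂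
  set ε := min ε₁ ε₂
  have h₁ := hC.add_smul_mem_of_le hx hz₁ (by positivity) (min_le_left ε₁ ε₂)
  have h₂ := hC.add_smul_mem_of_le hx hz₂ (by positivity) (min_le_right ε₁ ε₂)
  refine ⟨hC hy₁ hy₂ ht₁ ht₂ ht, _, hC h₁ h₂ ht₁ ht₂ ht,
    mem_openSegment_iff_eq_add_smul_sub.2 ⟨ε, lt_min hε₁ hε₂, ?_⟩⟩
  obtain rfl : t₂ = 1 - t₁ := by linear_combination ht
  module

theorem Convex.isFace_prolongable (hC : Convex ℝ C) : IsFace C (prolongable C x) := by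
  refine ⟨sep_subset _ _, hC.convex_prolongable, ?_⟩
  rintro p ⟨-, q, hq, hxpq⟩ y hy z hz hpyz
  have prolong {y z : X} (hz : z ∈ C) (hpyz : p ∈ openSegment ℝ y z) :
      ∃ r ∈ C, x ∈ openSegment ℝ y r :=
    let ⟨r, hr, hxr⟩ := exists_mem_segment_of_mem_openSegment_of_mem_openSegment hxpq hpyz
    ⟨r, hC.segment_subset hz hq hr, hxr⟩
  exact ⟨⟨hy, prolong hz hpyz⟩, ⟨hz, prolong hy (openSegment_symm ℝ y z ▸ hpyz)⟩⟩

theorem IsFace.prolongable_subset (hF : IsFace C F) (hxF : x ∈ F) : prolongable C x ⊆ F := by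
  rintro y ⟨hy, z, hz, hxyz⟩
  exact (hF.2.2 x hxF y hy z hz hxyz).1

theorem Convex.minFace_eq_prolongable (hC : Convex ℝ C) (hx : x ∈ C) :
    minFace C x = prolongable C x := by
  refine subset_antisymm (sInter_subset_of_mem ?_) (subset_sInter ?_)
  · exact ⟨hC.isFace_prolongable, self_mem_prolongable hx⟩
  · rintro F ⟨hF, hxF⟩
    exact hF.prolongable_subset hxF

end

/-- `x ∈ icr C` iff the minimal face of `x` in `C` is all of `C`. -/
theorem mem_icr_iff_minFace_eq {X : Type*} [AddCommGroup X] [Module ℝ X]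
    (C : Set X) (hC : Convex ℝ C) (x : X) (hx : x ∈ C) :
    x ∈ icr C ↔ minFace C x = C := by
  simp only [icr, hC.minFace_eq_prolongable hx, prolongable, sep_eq_self_iff_mem_true,
    mem_ofPred_eq, hx, true_and]
end

section
/- Let C be a convex subset of a real vector space. Then x ∈ icr C if and only if x ∈ C and cone(C - x) is a linear subspace of X. -/
open Pointwise

lemma mem_coneHull_sub {X : Type*} [AddCommGroup X] [Module ℝ X] (C : Set X) (x w : X) :
    w ∈ coneHull ((fun c => c - x) '' C) ↔ ∃ (a : ℝ) (c : X), 0 ≤ a ∧ c ∈ C ∧ w = a • (c - x) := by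
  constructor
  · rintro ⟨a, s, ha, ⟨c, hc, rfl⟩, rfl⟩
    exact ⟨a, c, ha, hc, rfl⟩
  · rintro ⟨a, c, ha, hc, rfl⟩
    exact ⟨a, c - x, ha, ⟨c, hc, rfl⟩, rfl⟩


/-- `x ∈ icr C` iff `x ∈ C` and `cone (C - x)` is a linear subspace. -/
theorem mem_icr_iff_coneHull_linear {X : Type*} [AddCommGroup X] [Module ℝ X]
    (C : Set X) (hC : Convex ℝ C) (x : X) :
    x ∈ icr C ↔
      x ∈ C ∧ ∃ S : Submodule ℝ X, coneHull ((fun c => c - x) '' C) = (S : Set X) := by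
  constructor
  · rintro ⟨hxC, hkey⟩
    refine ⟨hxC, ?_⟩
    -- negation lemma
    have hneg : ∀ c ∈ C, ∃ b : ℝ, 0 ≤ b ∧ ∃ z ∈ C, x - c = b • (z - x) := by
      intro c hc
      obtain ⟨z, hz, t, u, ht, hu, htu, heq⟩ := hkey c hc
      refine ⟨u / t, by positivity, z, hz, ?_⟩
      have hz' : z - x = t • (z - c) := by
        have : x = t • c + u • z := heq.symm
        rw [this]
        have : (1:ℝ) = t + u := htu.symm
        calc z - (t • c + u • z) = (1 - u) • z - t • c := by
              rw [sub_smul, one_smul]; abel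
          _ = t • z - t • c := by rw [show (1:ℝ) - u = t by linarith]
          _ = t • (z - c) := by rw [smul_sub]
      rw [hz', smul_smul, div_mul_cancel₀ _ ht.ne']
      have hx' : x - c = u • (z - c) := by
        have : x = t • c + u • z := heq.symm
        rw [this]
        calc t • c + u • z - c = u • z - (1 - t) • c := by
              rw [sub_smul, one_smul]; abel
          _ = u • z - u • c := by rw [show (1:ℝ) - t = u by linarith]
          _ = u • (z - c) := by rw [smul_sub]
      exact hx'
    refine ⟨{ carrier := coneHull ((fun c => c - x) '' C)
              zero_mem' := ⟨0, x - x, le_refl 0, ⟨x, hxC, rfl⟩, by simp⟩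
              add_mem' := ?_
              smul_mem' := ?_ }, rfl⟩
    · rintro w₁ w₂ h1 h2
      obtain ⟨a, c, ha, hc, rfl⟩ := (mem_coneHull_sub C x w₁).1 h1
      obtain ⟨b, d, hb, hd, rfl⟩ := (mem_coneHull_sub C x w₂).1 h2
      rcases eq_or_lt_of_le (by positivity : (0:ℝ) ≤ a + b) with hab | hab
      · have ha0 : a = 0 := by linarith
        have hb0 : b = 0 := by linarith
        simp [ha0, hb0]
        exact ⟨0, x - x, le_refl 0, ⟨x, hxC, rfl⟩, by simp⟩
      · refine (mem_coneHull_sub C x _).2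
          ⟨a + b, (a / (a + b)) • c + (b / (a + b)) • d, le_of_lt hab,
           hC hc hd (by positivity) (by positivity) (by field_simp), ?_⟩
        match_scalars <;> · field_simp; try ring
    · rintro r w hw
      obtain ⟨a, c, ha, hc, rfl⟩ := (mem_coneHull_sub C x w).1 hw
      rcases le_or_gt 0 r with hr | hr
      · exact (mem_coneHull_sub C x _).2 ⟨r * a, c, by positivity, hc, by rw [smul_smul]⟩
      · obtain ⟨b, hb, z, hz, hxz⟩ := hneg c hc
        refine (mem_coneHull_sub C x _).2 ⟨(-(r * a)) * b, z, ?_, hz, ?_⟩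
        · have : 0 ≤ -(r * a) := by nlinarith
          positivity
        · rw [mul_smul, ← hxz]
          match_scalars <;> ring
  · rintro ⟨hxC, S, hS⟩
    refine ⟨hxC, ?_⟩
    intro y hy
    have hymem : y - x ∈ (S : Set X) := by
      rw [← hS]; exact (mem_coneHull_sub C x _).2 ⟨1, y, zero_le_one, hy, (one_smul ℝ _).symm⟩
    have hneg : x - y ∈ coneHull ((fun c => c - x) '' C) := by
      rw [hS]
      have := S.neg_mem hymem
      rwa [neg_sub] at this
    obtain ⟨a, c, ha, hc, hac⟩ := (mem_coneHull_sub C x _).1 hneg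
    rcases eq_or_lt_of_le ha with ha0 | ha0
    · have hxy : y = x := by
        have h0 : x - y = 0 := by rw [hac, ← ha0, zero_smul]
        exact (sub_eq_zero.mp h0).symm
      exact ⟨x, hxC, 1/2, 1/2, by norm_num, by norm_num, by norm_num,
        by rw [hxy, ← add_smul]; norm_num⟩
    · refine ⟨c, hc, 1 / (1 + a), a / (1 + a), by positivity, by positivity,
        by field_simp, ?_⟩
      have h1a : (0:ℝ) < 1 + a := by linarith
      have : (1 + a) • x = y + a • c := by
        have : x - y = a • c - a • x := by rw [hac, smul_sub]
        have h2 : x + a • x = y + a • c := by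
          have h3 : (x - y) + (y + a • x) = (a • c - a • x) + (y + a • x) := by rw [this]
          calc x + a • x = (x - y) + (y + a • x) := by abel
            _ = (a • c - a • x) + (y + a • x) := h3
            _ = y + a • c := by abel
        calc (1 + a) • x = x + a • x := by rw [add_smul, one_smul]
          _ = y + a • c := h2
      calc (1 / (1 + a)) • y + (a / (1 + a)) • c
          = (1 / (1 + a)) • (y + a • c) := by match_scalars <;> ring
        _ = (1 / (1 + a)) • ((1 + a) • x) := by rw [this]
        _ = x := by
              rw [smul_smul, one_div_mul_cancel h1a.ne', one_smul]
end

section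
/- Let C be a convex subset of a topological real vector space X. Then the face relative interior fri C = {x ∈ C : C ⊆ closure(F_min(x,C))} is a convex set. -/
open Pointwise

/-! If `w` lies in the open segment between `x` and `y`, then `x` lies in the face
`minFace C w`, so `minFace C x ⊆ minFace C w`; hence `w` inherits from `x` the property
`C ⊆ closure (minFace C ·)`. -/

section MinFace

variable {X : Type*} [AddCommGroup X] [Module ℝ X] {C : Set X}

lemma isFace_self (hC : Convex ℝ C) : IsFace C C :=
  ⟨subset_rfl, hC, fun _ _ _ hy _ hz _ => ⟨hy, hz⟩⟩

lemma mem_minFace_self (x : X) : x ∈ minFace C x := fun _ hF => hF.2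

lemma minFace_subset {F : Set X} {x : X} (hF : IsFace C F) (hx : x ∈ F) : minFace C x ⊆ F :=
  Set.sInter_subset_of_mem ⟨hF, hx⟩

lemma isFace_minFace (hC : Convex ℝ C) {x : X} (hx : x ∈ C) : IsFace C (minFace C x) := by
  refine ⟨minFace_subset (isFace_self hC) hx, convex_sInter fun F hF => hF.1.2.1, ?_⟩
  intro w hw y hy z hz hwyz
  exact ⟨fun F hF => (hF.1.2.2 w (hw F hF) y hy z hz hwyz).1,
    fun F hF => (hF.1.2.2 w (hw F hF) y hy z hz hwyz).2⟩

lemma minFace_subset_minFace_of_mem_openSegment (hC : Convex ℝ C) {x y w : X} (hx : x ∈ C)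
    (hy : y ∈ C) (hw : w ∈ openSegment ℝ x y) : minFace C x ⊆ minFace C w := by
  have hwC : w ∈ C := hC.openSegment_subset hx hy hw
  have hx_mem : x ∈ minFace C w :=
    ((isFace_minFace hC hwC).2.2 w (mem_minFace_self w) x hx y hy hw).1
  exact minFace_subset (isFace_minFace hC hwC) hx_mem

end MinFace

theorem fri_convex_general {X : Type*} [AddCommGroup X] [Module ℝ X] [TopologicalSpace X]
    (C : Set X) (hC : Convex ℝ C) : Convex ℝ (fri C) := by
  refine convex_iff_openSegment_subset.2 fun x hx y hy w hw => ?_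
  refine ⟨hC.openSegment_subset hx.1 hy.1 hw, ?_⟩
  exact hx.2.trans (closure_mono (minFace_subset_minFace_of_mem_openSegment hC hx.1 hy.1 hw))

/-- the face relative interior of a convex set is convex. -/
theorem fri_convex {X : Type*} [AddCommGroup X] [Module ℝ X] [TopologicalSpace X]
    [IsTopologicalAddGroup X] [ContinuousSMul ℝ X]
    (C : Set X) (hC : Convex ℝ C) : Convex ℝ (fri C) :=
  fri_convex_general C hC
end

section
/- Let C be a convex subset of a topological real vector space X. Then fri C ⊆ qri C: if x ∈ C satisfies C ⊆ closure(F_min(x,C)), then the closure of cone(C - x) is a linear subspace of X. -/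
open Pointwise

/-!
For any pointed cone `K` containing `C - x`, the set `{y ∈ C | x - y ∈ K}` is a face of `C`
containing `x`, hence contains `F_min(x, C)`. Taking `K = cone (C - x)`, the hypothesis
`C ⊆ closure F_min(x, C)` gives `x - y ∈ closure K` for every `y ∈ C`: the closed convex cone
`closure K` contains the negatives of the generators of `K`, hence of all its elements, so it is
a linear subspace.
-/

section

variable {X : Type*} [AddCommGroup X] [Module ℝ X]

theorem subset_coneHull (S : Set X) : S ⊆ coneHull S :=
  fun s hs => ⟨1, s, zero_le_one, hs, (one_smul ℝ s).symm⟩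

theorem Convex.smul_add_smul_mem_coneHull {S : Set X} (hS : Convex ℝ S) {s t : X} (hs : s ∈ S)
    (ht : t ∈ S) {p q : ℝ} (hp : 0 ≤ p) (hq : 0 ≤ q) : p • s + q • t ∈ coneHull S := by
  rcases (add_nonneg hp hq).eq_or_lt with hpq | hpq
  · obtain ⟨rfl, rfl⟩ : p = 0 ∧ q = 0 := ⟨by linarith, by linarith⟩
    exact ⟨0, s, le_rfl, hs, by simp⟩
  · refine ⟨p + q, _, hpq.le, convex_iff_div.1 hS hs ht hp hq hpq, ?_⟩
    simp only [smul_add, smul_smul, mul_div_cancel₀ _ hpq.ne']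

def Convex.pointedConeHull {S : Set X} (hS : Convex ℝ S) (hne : S.Nonempty) : PointedCone ℝ X :=
  PointedCone.ofConeComb (coneHull S) (hne.mono (subset_coneHull S)) <| by
    rintro _ ⟨a, s, ha, hs, rfl⟩ _ ⟨b, t, hb, ht, rfl⟩ p hp q hq
    rw [smul_smul, smul_smul]
    exact hS.smul_add_smul_mem_coneHull hs ht (mul_nonneg hp ha) (mul_nonneg hq hb)

theorem Convex.image_sub_const {C : Set X} (hC : Convex ℝ C) (x : X) :
    Convex ℝ ((fun c => c - x) '' C) := by
  simpa [sub_eq_neg_add] using hC.translate (-x)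

theorem isFace_sep_sub_mem {C : Set X} (hC : Convex ℝ C) {x : X} (K : PointedCone ℝ X)
    (hK : ∀ y ∈ C, y - x ∈ K) : IsFace C {y ∈ C | x - y ∈ K} := by
  have sub_left_mem : ∀ y ∈ {y ∈ C | x - y ∈ K}, ∀ u ∈ C, ∀ v ∈ C,
      y ∈ openSegment ℝ u v → x - u ∈ K := by
    rintro _ ⟨-, hy⟩ u - v hv ⟨t, s, ht, hs, hts, rfl⟩
    have : x - u = (1 / t) • (x - (t • u + s • v)) + (s / t) • (v - x) := by
      obtain rfl : s = 1 - t := by linarith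
      match_scalars <;> field_simp <;> ring
    rw [this]
    exact K.add_mem (K.smul_mem (by positivity) hy) (K.smul_mem (by positivity) (hK v hv))
  refine ⟨fun y hy => hy.1, ?_, fun y hy u hu v hv huv =>
    ⟨⟨hu, sub_left_mem y hy u hu v hv huv⟩,
      ⟨hv, sub_left_mem y hy v hv u hu (openSegment_symm ℝ u v ▸ huv)⟩⟩⟩
  convert hC.inter (K.convex.translate_preimage_left x).neg using 1
  ext y
  simp [sub_eq_neg_add]

theorem sub_mem_closure_of_mem_closure_minFace [TopologicalSpace X] [ContinuousSub X]
    {C : Set X} (hC : Convex ℝ C) {x : X} (hx : x ∈ C) (K : PointedCone ℝ X)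
    (hK : ∀ y ∈ C, y - x ∈ K) {y : X} (hy : y ∈ closure (minFace C x)) :
    x - y ∈ closure (K : Set X) := by
  have hface : minFace C x ⊆ {y ∈ C | x - y ∈ K} :=
    Set.sInter_subset_of_mem ⟨isFace_sep_sub_mem hC K hK, hx, by simp⟩
  exact map_mem_closure (continuous_const.sub continuous_id) hy fun y hy => (hface hy).2

theorem PointedCone.exists_submodule_closure_eq_of_neg_mem [TopologicalSpace X] [ContinuousAdd X]
    [ContinuousNeg X] [ContinuousConstSMul ℝ X] (K : PointedCone ℝ X)
    (hK : ∀ v ∈ K, -v ∈ closure (K : Set X)) :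
    ∃ S : Submodule ℝ X, closure (K : Set X) = S := by
  refine ⟨K.closure.lineal, Set.ext fun v =>
    ⟨fun hv => PointedCone.mem_lineal.2 ⟨hv, ?_⟩, fun hv => (PointedCone.mem_lineal.1 hv).1⟩⟩
  simpa only [PointedCone.mem_closure, closure_closure] using map_mem_closure continuous_neg hv hK

end

/-- `fri C ⊆ qri C`: if `x ∈ C` and `C ⊆ closure (F_min(x,C))`, then
the closure of `cone (C - x)` is a linear subspace. -/
theorem fri_subset_qri {X : Type*} [AddCommGroup X] [Module ℝ X] [TopologicalSpace X]
    [IsTopologicalAddGroup X] [ContinuousSMul ℝ X]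
    (C : Set X) (hC : Convex ℝ C) (x : X) (hx : x ∈ C)
    (hfri : C ⊆ closure (minFace C x)) :
    ∃ S : Submodule ℝ X, closure (coneHull ((fun c => c - x) '' C)) = (S : Set X) := by
  let K := (hC.image_sub_const x).pointedConeHull ⟨_, x, hx, rfl⟩
  have hK : ∀ y ∈ C, y - x ∈ K := fun y hy => subset_coneHull _ ⟨y, hy, rfl⟩
  refine K.exists_submodule_closure_eq_of_neg_mem ?_
  rintro _ ⟨a, _, ha, ⟨y, hy, rfl⟩, rfl⟩
  rw [← smul_neg, neg_sub]
  exact K.closure.smul_mem ha (sub_mem_closure_of_mem_closure_minFace hC hx K hK (hfri hy))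
end

section
/- Let C be a convex subset of a topological real vector space with fri C ≠ ∅. Then closure(C) = closure(fri C). -/
open Pointwise

/-!
Fix `x₀ ∈ fri C`. For `y ∈ C`, every point `z` of the open segment `(x₀, y)` lies in `fri C`:
any face containing `z` contains `x₀`, so `minFace C x₀ ⊆ minFace C z`, and `C` already lies in
the closure of the smaller face. Hence `y`, a limit of such points, lies in `closure (fri C)`.
-/

theorem minFace_subset_minFace_of_mem_openSegment_s8 {X : Type*} [AddCommGroup X] [Module ℝ X]
    {C : Set X} {x y z : X} (hx : x ∈ C) (hy : y ∈ C) (hz : z ∈ openSegment ℝ x y) :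
    minFace C x ⊆ minFace C z := by
  rintro w hw F ⟨hF, hzF⟩
  exact hw F ⟨hF, (hF.2.2 z hzF x hx y hy hz).1⟩

theorem openSegment_subset_fri {X : Type*} [AddCommGroup X] [Module ℝ X] [TopologicalSpace X]
    {C : Set X} (hC : Convex ℝ C) {x y : X} (hx : x ∈ fri C) (hy : y ∈ C) :
    openSegment ℝ x y ⊆ fri C := fun _ hz =>
  ⟨hC.openSegment_subset hx.1 hy hz,
    hx.2.trans (closure_mono (minFace_subset_minFace_of_mem_openSegment_s8 hx.1 hy hz))⟩

theorem subset_closure_fri {X : Type*} [AddCommGroup X] [Module ℝ X] [TopologicalSpace X]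
    [ContinuousAdd X] [ContinuousSMul ℝ X] {C : Set X} (hC : Convex ℝ C)
    (hne : (fri C).Nonempty) : C ⊆ closure (fri C) := by
  obtain ⟨x₀, hx₀⟩ := hne
  intro y hy
  exact closure_mono (openSegment_subset_fri hC hx₀ hy)
    (segment_subset_closure_openSegment (right_mem_segment ℝ x₀ y))

/-- if `fri C ≠ ∅`, then `closure C = closure (fri C)`. -/
theorem closure_eq_closure_fri {X : Type*} [AddCommGroup X] [Module ℝ X] [TopologicalSpace X]
    [IsTopologicalAddGroup X] [ContinuousSMul ℝ X]
    (C : Set X) (hC : Convex ℝ C) (hne : (fri C).Nonempty) :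
    closure C = closure (fri C) :=
  (closure_mono fun _ hx => hx.1).antisymm'
    (closure_minimal (subset_closure_fri hC hne) isClosed_closure)
end

section
/- Let T: X → Y be a continuous linear map between topological real vector spaces and C ⊆ X convex. Then T(fri C) ⊆ fri(T(C)). -/
open Pointwise

theorem IsFace.preimage_inter {X Y : Type*} [AddCommGroup X] [Module ℝ X]
    [AddCommGroup Y] [Module ℝ Y] {f : X →ₗ[ℝ] Y} {C : Set X} {G : Set Y}
    (hG : IsFace (f '' C) G) (hC : Convex ℝ C) : IsFace C (f ⁻¹' G ∩ C) := by
  obtain ⟨-, hGconv, hGface⟩ := hG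
  refine ⟨Set.inter_subset_right, (hGconv.linear_preimage f).inter hC, ?_⟩
  rintro a ⟨haG, -⟩ y hy z hz hseg
  have hfseg : f a ∈ openSegment ℝ (f y) (f z) := by
    rw [← f.coe_toAffineMap, ← image_openSegment]
    exact Set.mem_image_of_mem _ hseg
  obtain ⟨hyG, hzG⟩ := hGface (f a) haG (f y) ⟨y, hy, rfl⟩ (f z) ⟨z, hz, rfl⟩ hfseg
  exact ⟨⟨hyG, hy⟩, ⟨hzG, hz⟩⟩

theorem image_minFace_subset {X Y : Type*} [AddCommGroup X] [Module ℝ X]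
    [AddCommGroup Y] [Module ℝ Y] (f : X →ₗ[ℝ] Y) {C : Set X} (hC : Convex ℝ C)
    {x : X} (hx : x ∈ C) : f '' minFace C x ⊆ minFace (f '' C) (f x) := by
  rintro _ ⟨w, hw, rfl⟩ G ⟨hG, hxG⟩
  exact (hw _ ⟨hG.preimage_inter hC, hxG, hx⟩).1

theorem image_fri_subset_general {X Y : Type*} [AddCommGroup X] [Module ℝ X] [TopologicalSpace X]
    [AddCommGroup Y] [Module ℝ Y] [TopologicalSpace Y]
    (T : X →L[ℝ] Y) (C : Set X) (hC : Convex ℝ C) :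
    T '' (fri C) ⊆ fri (T '' C) := by
  rintro _ ⟨x, ⟨hxC, hCx⟩, rfl⟩
  refine ⟨Set.mem_image_of_mem T hxC, ?_⟩
  calc T '' C ⊆ T '' closure (minFace C x) := Set.image_mono hCx
    _ ⊆ closure (T '' minFace C x) := image_closure_subset_closure_image T.continuous
    _ ⊆ closure (minFace (T '' C) (T x)) :=
      closure_mono (image_minFace_subset (T : X →ₗ[ℝ] Y) hC hxC)

/-- continuous linear images: `T(fri C) ⊆ fri (T(C))`. -/
theorem image_fri_subset {X Y : Type*} [AddCommGroup X] [Module ℝ X] [TopologicalSpace X]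
    [IsTopologicalAddGroup X] [ContinuousSMul ℝ X]
    [AddCommGroup Y] [Module ℝ Y] [TopologicalSpace Y]
    [IsTopologicalAddGroup Y] [ContinuousSMul ℝ Y]
    (T : X →L[ℝ] Y) (C : Set X) (hC : Convex ℝ C) :
    T '' (fri C) ⊆ fri (T '' C) :=
  image_fri_subset_general T C hC
end

section
/- Let X be a topological real vector space, C ⊆ X a convex set, and x₀ ∈ C. Then x₀ ∉ fri C if and only if there exist y ∈ C and a neighbourhood V of y such that for every z ∈ V ∩ C and every ε > 0, the point x₀ + ε(x₀ - z) does not belong to C. -/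
open Pointwise

/-!
The minimal face of `C` through `x₀` is the set of points `z ∈ C` for which the segment from `z`
to `x₀` can be prolonged a little beyond `x₀` inside `C`. Hence `x₀ ∉ fri C` means that some
`y ∈ C` has a neighbourhood containing no such point, which is the stated condition.
-/

section

variable {X : Type*} [AddCommGroup X] [Module ℝ X]

def extendablePast (C : Set X) (x : X) : Set X :=
  {z ∈ C | ∃ ε : ℝ, 0 < ε ∧ x + ε • (x - z) ∈ C}

lemma Convex.add_smul_sub_mem_of_le {C : Set X} (hC : Convex ℝ C) {x z : X} (hx : x ∈ C)
    {ε ε' : ℝ} (hε : 0 ≤ ε) (hεε' : ε ≤ ε') (h : x + ε' • (x - z) ∈ C) :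
    x + ε • (x - z) ∈ C := by
  rcases hε.eq_or_lt with rfl | hε
  · simpa using hx
  have hε' : 0 < ε' := hε.trans_le hεε'
  have key := hC.add_smul_mem hx h (t := ε / ε') ⟨by positivity, div_le_one_of_le₀ hεε' hε'.le⟩
  rwa [smul_smul, div_mul_cancel₀ _ hε'.ne'] at key

lemma mem_openSegment_add_smul_sub (x z : X) {ε : ℝ} (hε : 0 < ε) :
    x ∈ openSegment ℝ z (x + ε • (x - z)) := by
  refine ⟨ε / (1 + ε), 1 / (1 + ε), by positivity, by positivity, by field_simp; ring, ?_⟩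
  match_scalars <;> field_simp
  ring

variable {C : Set X} {x₀ : X}

lemma self_mem_extendablePast (hx₀ : x₀ ∈ C) : x₀ ∈ extendablePast C x₀ :=
  ⟨hx₀, 1, one_pos, by simpa using hx₀⟩

lemma convex_extendablePast (hC : Convex ℝ C) (hx₀ : x₀ ∈ C) :
    Convex ℝ (extendablePast C x₀) := by
  rintro z₁ ⟨hz₁, ε₁, hε₁, h₁⟩ z₂ ⟨hz₂, ε₂, hε₂, h₂⟩ a b ha hb hab
  refine ⟨hC hz₁ hz₂ ha hb hab, min ε₁ ε₂, lt_min hε₁ hε₂, ?_⟩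
  have k₁ := hC.add_smul_sub_mem_of_le hx₀ (lt_min hε₁ hε₂).le (min_le_left _ _) h₁
  have k₂ := hC.add_smul_sub_mem_of_le hx₀ (lt_min hε₁ hε₂).le (min_le_right _ _) h₂
  convert hC k₁ k₂ ha hb hab using 1
  obtain rfl : b = 1 - a := by linarith
  module

/-- If `x₀ + ε (x₀ - (t y + s z)) = p ∈ C`, mixing `p` with `z` cancels the `z`-term and leaves
`x₀ + (ε t / (1 + ε s)) (x₀ - y)`. -/
lemma left_mem_extendablePast_of_combo_mem (hC : Convex ℝ C) {y z : X} (hy : y ∈ C)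
    (hz : z ∈ C) {t s : ℝ} (ht : 0 < t) (hs : 0 < s) (hts : t + s = 1)
    (h : t • y + s • z ∈ extendablePast C x₀) : y ∈ extendablePast C x₀ := by
  obtain ⟨-, ε, hε, hp⟩ := h
  refine ⟨hy, ε * t / (1 + ε * s), by positivity, ?_⟩
  convert hC hp hz (a := 1 / (1 + ε * s)) (b := ε * s / (1 + ε * s)) (by positivity)
    (by positivity) (by field_simp) using 1
  obtain rfl : s = 1 - t := by linarith
  match_scalars <;> field_simp <;> ring

lemma isFace_extendablePast (hC : Convex ℝ C) (hx₀ : x₀ ∈ C) :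
    IsFace C (extendablePast C x₀) := by
  refine ⟨fun z hz => hz.1, convex_extendablePast hC hx₀, ?_⟩
  rintro x hx y hy z hz ⟨a, b, ha, hb, hab, rfl⟩
  exact ⟨left_mem_extendablePast_of_combo_mem hC hy hz ha hb hab hx,
    left_mem_extendablePast_of_combo_mem hC hz hy hb ha (by rw [add_comm, hab])
      (by rwa [add_comm])⟩

lemma extendablePast_subset_of_isFace {F : Set X} (hF : IsFace C F) (hx₀F : x₀ ∈ F) :
    extendablePast C x₀ ⊆ F := by
  rintro z ⟨hz, ε, hε, hp⟩
  exact (hF.2.2 x₀ hx₀F z hz _ hp (mem_openSegment_add_smul_sub x₀ z hε)).1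

theorem minFace_eq_extendablePast (hC : Convex ℝ C) (hx₀ : x₀ ∈ C) :
    minFace C x₀ = extendablePast C x₀ :=
  subset_antisymm
    (Set.sInter_subset_of_mem ⟨isFace_extendablePast hC hx₀, self_mem_extendablePast hx₀⟩)
    fun _ hz _ hF => extendablePast_subset_of_isFace hF.1 hF.2 hz

end

theorem not_mem_fri_iff_general {X : Type*} [AddCommGroup X] [Module ℝ X] [TopologicalSpace X]
    (C : Set X) (hC : Convex ℝ C) (x₀ : X) (hx₀ : x₀ ∈ C) :
    x₀ ∉ fri C ↔
      ∃ y ∈ C, ∃ V ∈ nhds y, ∀ z ∈ V ∩ C, ∀ ε : ℝ, 0 < ε → x₀ + ε • (x₀ - z) ∉ C := by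
  have hfri : x₀ ∈ fri C ↔ ∀ y ∈ C, y ∈ closure (extendablePast C x₀) := by
    rw [fri, Set.mem_ofPred_eq, minFace_eq_extendablePast hC hx₀, and_iff_right hx₀]
    rfl
  simp only [hfri, mem_closure_iff_nhds, extendablePast, Set.Nonempty, Set.mem_inter_iff,
    Set.mem_ofPred_eq]
  push Not
  simp only [and_imp]

/-- characterisation of points outside the face relative interior. -/
theorem not_mem_fri_iff {X : Type*} [AddCommGroup X] [Module ℝ X] [TopologicalSpace X]
    [IsTopologicalAddGroup X] [ContinuousSMul ℝ X]
    (C : Set X) (hC : Convex ℝ C) (x₀ : X) (hx₀ : x₀ ∈ C) :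
    x₀ ∉ fri C ↔
      ∃ y ∈ C, ∃ V ∈ nhds y, ∀ z ∈ V ∩ C, ∀ ε : ℝ, 0 < ε → x₀ + ε • (x₀ - z) ∉ C :=
  not_mem_fri_iff_general C hC x₀ hx₀
end

section
/- Let X = l² and let v ∈ l² be the sequence (1/n)_{n≥1}. For any x ∈ l² and any δ > 0, there exists y ∈ l² with ‖y‖₂ = δ, y has nonnegative entries, and such that for every ε > 0 there is an index i ∈ ℕ with |x_i| < ε · y_i. (More generally, the same holds in l^d for any d ∈ [1,∞).) -/
open Pointwise

open scoped ENNReal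

/-- in `l^p` (`1 ≤ p < ∞`), for any `x` and `δ > 0`, there is a
nonnegative `y` with `‖y‖ = δ` such that for every `ε > 0` some coordinate
satisfies `|x i| < ε * y i`. -/
theorem exists_slow_majorant (p : ℝ≥0∞) (hp : 1 ≤ p) (hp' : p ≠ ⊤)
    (x : lp (fun _ : ℕ => ℝ) p) (δ : ℝ) (hδ : 0 < δ) :
    ∃ y : lp (fun _ : ℕ => ℝ) p, ‖y‖ = δ ∧ (∀ i, 0 ≤ (y : ℕ → ℝ) i) ∧
      ∀ ε : ℝ, 0 < ε → ∃ i : ℕ, |(x : ℕ → ℝ) i| < ε * (y : ℕ → ℝ) i := by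
  haveI : Fact (1 ≤ p) := ⟨hp⟩
  set pr := p.toReal with hpr
  have hpr1 : 1 ≤ pr := by
    rw [hpr, ← ENNReal.toReal_one]
    exact ENNReal.toReal_mono hp' hp
  have hpr0 : 0 < pr := lt_of_lt_of_le one_pos hpr1
  have hsum : Summable fun i => ‖(x : ℕ → ℝ) i‖ ^ pr := (lp.memℓp x).summable hpr0
  have hx0 : ∀ ε : ℝ, 0 < ε → ∀ᶠ i in Filter.atTop, |(x : ℕ → ℝ) i| < ε := by
    intro ε hε
    have h1 := hsum.tendsto_atTop_zero
    have h2 : ∀ᶠ i in Filter.atTop, ‖(x : ℕ → ℝ) i‖ ^ pr < ε ^ pr :=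
      h1.eventually (gt_mem_nhds (Real.rpow_pos_of_pos hε _))
    refine h2.mono fun i hi => ?_
    rw [← Real.norm_eq_abs]
    exact (Real.rpow_lt_rpow_iff (norm_nonneg _) hε.le hpr0).1 hi
  -- choose indices
  have key : ∀ (m k : ℕ), ∃ i, m ≤ i ∧ |(x : ℕ → ℝ) i| < (1/4 : ℝ) ^ k := by
    intro m k
    have := (hx0 ((1/4 : ℝ) ^ k) (by positivity)).and (Filter.eventually_ge_atTop m)
    obtain ⟨i, hi1, hi2⟩ := this.exists
    exact ⟨i, hi2, hi1⟩
  -- recursive sequence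
  let n : ℕ → ℕ := fun k => Nat.rec ((key 0 0).choose) (fun k nk => (key (nk + 1) (k+1)).choose) k
  have hnx : ∀ k, |(x : ℕ → ℝ) (n k)| < (1/4 : ℝ) ^ k := by
    intro k
    cases k with
    | zero => exact (key 0 0).choose_spec.2
    | succ k => exact (key (n k + 1) (k+1)).choose_spec.2
  have hmono : StrictMono n := by
    apply strictMono_nat_of_lt_succ
    intro k
    have := (key (n k + 1) (k+1)).choose_spec.1
    exact Nat.lt_of_succ_le this
  have hinj : Function.Injective n := hmono.injective
  -- the unnormalized sequence
  have dec : ∀ i, Decidable (∃ k, n k = i) := fun i => Classical.propDecidable _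
  let y' : ℕ → ℝ := fun i => @dite _ (∃ k, n k = i) (dec i) (fun h => (1/2 : ℝ) ^ h.choose) (fun _ => 0)
  have hy'n : ∀ k, y' (n k) = (1/2 : ℝ) ^ k := by
    intro k
    have h : ∃ k', n k' = n k := ⟨k, rfl⟩
    have : h.choose = k := hinj h.choose_spec
    simp only [y', dif_pos h, this]
  have hy'nonneg : ∀ i, 0 ≤ y' i := by
    intro i
    simp only [y']
    split <;> positivity
  have hy'zero : ∀ i ∉ Set.range n, y' i = 0 := by
    intro i hi
    simp only [y']
    rw [dif_neg]
    rintro ⟨k, hk⟩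
    exact hi ⟨k, hk⟩
  -- membership
  have hmem : Memℓp y' p := by
    apply memℓp_gen
    rw [← hinj.summable_iff (f := fun i => ‖y' i‖ ^ pr)]
    · have heq : ((fun i => ‖y' i‖ ^ pr) ∘ n) = fun k => ((1/2 : ℝ) ^ pr) ^ k := by
        funext k
        simp only [Function.comp_apply, hy'n k, Real.norm_eq_abs,
          abs_of_nonneg (by positivity : (0:ℝ) ≤ (1/2:ℝ)^k)]
        rw [← Real.rpow_natCast ((1/2:ℝ)) k, ← Real.rpow_mul (by norm_num),
          ← Real.rpow_natCast ((1/2:ℝ)^pr) k, ← Real.rpow_mul (by positivity), mul_comm]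
      rw [heq]
      exact summable_geometric_of_lt_one (by positivity)
        (Real.rpow_lt_one (by norm_num) (by norm_num) hpr0)
    · intro i hi
      rw [hy'zero i hi]
      simp [Real.zero_rpow hpr0.ne']
  set Y : lp (fun _ : ℕ => ℝ) p := ⟨y', hmem⟩ with hY
  have hYcoe : (Y : ℕ → ℝ) = y' := rfl
  have hYne : Y ≠ 0 := by
    intro h
    have : y' (n 0) = 0 := by
      rw [← hYcoe, h]; rfl
    rw [hy'n 0] at this; norm_num at this
  have hYnorm : 0 < ‖Y‖ := norm_pos_iff.mpr hYne
  set c : ℝ := δ / ‖Y‖ with hc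
  have hcpos : 0 < c := div_pos hδ hYnorm
  refine ⟨c • Y, ?_, ?_, ?_⟩
  · rw [norm_smul, Real.norm_eq_abs, abs_of_pos hcpos, hc, div_mul_cancel₀ _ hYnorm.ne']
  · intro i
    have : ((c • Y : lp (fun _ : ℕ => ℝ) p) : ℕ → ℝ) i = c * y' i := by
      rw [lp.coeFn_smul]; rfl
    rw [this]
    exact mul_nonneg hcpos.le (hy'nonneg i)
  · intro ε hε
    obtain ⟨k, hk⟩ := exists_pow_lt_of_lt_one (mul_pos hε hcpos) (by norm_num : (1/2:ℝ) < 1)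
    refine ⟨n k, ?_⟩
    have hcoe : ((c • Y : lp (fun _ : ℕ => ℝ) p) : ℕ → ℝ) (n k) = c * y' (n k) := by
      rw [lp.coeFn_smul]; rfl
    rw [hcoe, hy'n k]
    calc |(x : ℕ → ℝ) (n k)| < (1/4 : ℝ) ^ k := hnx k
      _ = (1/2 : ℝ) ^ k * (1/2 : ℝ) ^ k := by rw [← mul_pow]; norm_num
      _ < (ε * c) * (1/2 : ℝ) ^ k := by
          apply mul_lt_mul_of_pos_right hk (by positivity)
      _ = ε * (c * (1/2 : ℝ) ^ k) := by ring
end
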